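/- Let σ > 0 and let q(r) = (2/√(2π))·∫_{r/σ}^{3r/σ} e^{-t²/2} dt, p(r) = (2/√(2π))·∫_0^{r/σ} e^{-t²/2} dt, and λ(r) = (2/√(2π))·∫_{3r/σ}^{∞} e^{-t²/2} dt. Then there is no r > 0 and no value w ∈ (0,1] such that simultaneously p(r) ≥ w/8, λ(r) ≥ w/8, and q(r) < w/160. -/

import Mathlib

open Real MeasureTheory intervalIntegral

/-- Mass of the central interval `[-r, r]` for `N(0,σ²)`. -/
noncomputable def pMass (σ r : ℝ) : ℝ :=
  (2 / Real.sqrt (2 * π)) * ∫ t in (0 : ℝ)..(r / σ), Real.exp (-t ^ 2 / 2)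

/-- Mass of the annulus `r ≤ |t| ≤ 3r` for `N(0,σ²)`. -/
noncomputable def qMass (σ r : ℝ) : ℝ :=
  (2 / Real.sqrt (2 * π)) * ∫ t in (r / σ)..(3 * r / σ), Real.exp (-t ^ 2 / 2)

/-- Mass of the tails `|t| ≥ 3r` for `N(0,σ²)`. -/
noncomputable def lamMass (σ r : ℝ) : ℝ :=
  (2 / Real.sqrt (2 * π)) * ∫ t in Set.Ioi (3 * r / σ), Real.exp (-t ^ 2 / 2)

open Filter Set

/-! For `x = r / σ` the annulus `[x, 3x]` has length `2x` and density at least `e^{-9x²/2}`.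
If `x ≤ 1/2` this beats the core `[0, x]`, of mass at most `x`, by the factor `2e^{-9/8} > 1/20`;
if `x > 1/2` it beats the tail beyond `3x`, of mass at most `e^{-9x²/2} / 3x` (Mills' ratio),
by the factor `6x² > 1`. -/

lemma integrable_exp_neg_sq_div_two : Integrable fun t : ℝ => exp (-t ^ 2 / 2) :=
  ((integrable_exp_neg_mul_sq (by norm_num : (0 : ℝ) < 1 / 2)).congr
    (ae_of_all _ fun t => by ring_nf))

lemma integrable_mul_exp_neg_sq_div_two : Integrable fun t : ℝ => t * exp (-t ^ 2 / 2) :=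
  ((integrable_mul_exp_neg_mul_sq (by norm_num : (0 : ℝ) < 1 / 2)).congr
    (ae_of_all _ fun t => by ring_nf))

lemma tendsto_exp_neg_sq_div_two_atTop :
    Tendsto (fun t : ℝ => exp (-t ^ 2 / 2)) atTop (nhds 0) :=
  tendsto_exp_atBot.comp <| Tendsto.atBot_div_const two_pos <|
    tendsto_neg_atTop_atBot.comp (tendsto_pow_atTop two_ne_zero)

lemma integral_Ioi_mul_exp_neg_sq_div_two (a : ℝ) :
    ∫ t in Ioi a, t * exp (-t ^ 2 / 2) = exp (-a ^ 2 / 2) := by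
  have hderiv (x : ℝ) : HasDerivAt (fun t : ℝ => -exp (-t ^ 2 / 2)) (x * exp (-x ^ 2 / 2)) x :=
    ((hasDerivAt_pow 2 x).fun_neg.div_const 2).exp.fun_neg.congr_deriv (by norm_num; ring)
  simpa using integral_Ioi_of_hasDerivAt_of_tendsto' (a := a) (fun x _ => hderiv x)
    integrable_mul_exp_neg_sq_div_two.integrableOn tendsto_exp_neg_sq_div_two_atTop.neg

lemma integral_Ioi_exp_neg_sq_div_two_le {a : ℝ} (ha : 0 < a) :
    ∫ t in Ioi a, exp (-t ^ 2 / 2) ≤ exp (-a ^ 2 / 2) / a :=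
  calc ∫ t in Ioi a, exp (-t ^ 2 / 2)
      ≤ ∫ t in Ioi a, t * exp (-t ^ 2 / 2) / a := by
        refine setIntegral_mono_on integrable_exp_neg_sq_div_two.integrableOn
          (integrable_mul_exp_neg_sq_div_two.integrableOn.div_const a) measurableSet_Ioi fun t ht => ?_
        rw [le_div_iff₀ ha, mul_comm]
        exact mul_le_mul_of_nonneg_right (le_of_lt ht) (exp_pos _).le
    _ = exp (-a ^ 2 / 2) / a := by
        rw [MeasureTheory.integral_div, integral_Ioi_mul_exp_neg_sq_div_two]

lemma integral_exp_neg_sq_div_two_le_sub {a b : ℝ} (hab : a ≤ b) :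
    ∫ t in a..b, exp (-t ^ 2 / 2) ≤ b - a := by
  have := integral_mono_on hab integrable_exp_neg_sq_div_two.intervalIntegrable
    intervalIntegrable_const fun t _ => exp_le_one_iff.2 (by nlinarith [sq_nonneg t] :
      -t ^ 2 / 2 ≤ 0)
  simpa using this

lemma sub_mul_exp_neg_sq_div_two_le_integral {a b : ℝ} (ha : 0 ≤ a) (hab : a ≤ b) :
    (b - a) * exp (-b ^ 2 / 2) ≤ ∫ t in a..b, exp (-t ^ 2 / 2) := by
  have := integral_mono_on hab intervalIntegrable_const
    integrable_exp_neg_sq_div_two.intervalIntegrable fun t ht =>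
      exp_le_exp.2 (by nlinarith [ht.1, ht.2] : -b ^ 2 / 2 ≤ -t ^ 2 / 2)
  simpa using this

lemma exp_nine_eighths_lt_forty : exp (9 / 8) < 40 :=
  calc exp (9 / 8) < exp 1 ^ 2 := by
        rw [← exp_nat_mul]; exact exp_lt_exp.2 (by norm_num)
    _ < 40 := by nlinarith [exp_one_lt_d9, exp_pos 1]

lemma integral_core_or_tail_le_twenty_mul_annulus {x : ℝ} (hx : 0 < x) :
    ∫ t in (0 : ℝ)..x, exp (-t ^ 2 / 2) ≤ 20 * ∫ t in x..(3 * x), exp (-t ^ 2 / 2) ∨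
      ∫ t in Ioi (3 * x), exp (-t ^ 2 / 2) ≤ 20 * ∫ t in x..(3 * x), exp (-t ^ 2 / 2) := by
  set E := exp (-(3 * x) ^ 2 / 2)
  have hE : 0 < E := exp_pos _
  have hannulus : 2 * x * E ≤ ∫ t in x..(3 * x), exp (-t ^ 2 / 2) := by
    have := sub_mul_exp_neg_sq_div_two_le_integral hx.le (by linarith : x ≤ 3 * x)
    linarith
  rcases le_or_gt x (1 / 2) with hsmall | hlarge
  · left
    have hcore := integral_exp_neg_sq_div_two_le_sub hx.le
    have hE_ge : 1 ≤ 40 * E := by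
      have : exp (-(9 / 8)) ≤ E := exp_le_exp.2 (by nlinarith)
      rw [exp_neg] at this
      have := (inv_lt_inv₀ (by norm_num) (exp_pos _)).2 exp_nine_eighths_lt_forty
      linarith
    nlinarith
  · right
    have htail := integral_Ioi_exp_neg_sq_div_two_le (by linarith : 0 < 3 * x)
    have : E / (3 * x) ≤ 40 * x * E := by
      rw [div_le_iff₀ (by linarith)]
      nlinarith [mul_lt_mul_of_pos_left (mul_lt_mul hlarge hlarge.le (by norm_num) hx.le) hE]
    linarith

theorem no_terrific_configuration (σ : ℝ) (hσ : 0 < σ) :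
    ¬ ∃ (r w : ℝ), 0 < r ∧ 0 < w ∧ w ≤ 1 ∧
      w / 8 ≤ pMass σ r ∧ w / 8 ≤ lamMass σ r ∧ qMass σ r < w / 160 := by
  rintro ⟨r, w, hr, -, -, hp, hl, hq⟩
  rw [pMass] at hp
  rw [lamMass, mul_div_assoc] at hl
  rw [qMass, mul_div_assoc] at hq
  have hc : 0 < 2 / √(2 * π) := by positivity
  rcases integral_core_or_tail_le_twenty_mul_annulus (div_pos hr hσ) with h | h <;>
    linarith [mul_le_mul_of_nonneg_left h hc.le]
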